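/- arXiv:1408.0668 — 5 statements merged into one kernel-verified Lean document; each statement's English description precedes it below -/
import Mathlib

section
/- Let A be a GNF*-algebra. Then τ is also a partial right counit: (Id_{A_j} ⊗ τ) ∘ δ_{j,0} = Id_{A_j} for every j ∈ ℕ. -/
open scoped TensorProduct

structure GNFData (F : Type) [Field F] where
  A : ℕ → Type
  [instAdd : ∀ i, AddCommGroup (A i)]
  [instMod : ∀ i, Module F (A i)]
  mul : ∀ i j, A i →ₗ[F] A j →ₗ[F] A (i + j)
  comul : ∀ i j, A (i + j) →ₗ[F] A i ⊗[F] A j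
  unit : F →ₗ[F] A 0
  counit : A 0 →ₗ[F] F
  star : ∀ i, A i →ₗ[F] A i

attribute [instance] GNFData.instAdd GNFData.instMod

variable {F : Type} [Field F]

/-- Cast between graded pieces along an equality of indices. -/
def GNFData.cast (G : GNFData F) {m n : ℕ} (h : m = n) : G.A m →ₗ[F] G.A n := by
  subst h; exact LinearMap.id

/-- The product as a linear map on the tensor product. -/
noncomputable def GNFData.mulMap (G : GNFData F) (i j : ℕ) :
    G.A i ⊗[F] G.A j →ₗ[F] G.A (i + j) :=
  TensorProduct.lift (G.mul i j)

/-- The axioms of a graded involutive nearly Frobenius algebra (GNF*-algebra). -/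
structure IsGNF (G : GNFData F) : Prop where
  finite : ∀ i, FiniteDimensional F (G.A i)
  assoc : ∀ i j k (x : G.A i) (y : G.A j) (z : G.A k),
    G.mul i (j + k) x (G.mul j k y z)
      = G.cast (Nat.add_assoc i j k) (G.mul (i + j) k (G.mul i j x y) z)
  left_unit : ∀ j (x : G.A j),
    G.mul 0 j (G.unit 1) x = G.cast (Nat.zero_add j).symm x
  coassoc : ∀ i j k (x : G.A (i + (j + k))),
    (TensorProduct.assoc F (G.A i) (G.A j) (G.A k)).symm
        (LinearMap.lTensor (G.A i) (G.comul j k) (G.comul i (j + k) x))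
      = LinearMap.rTensor (G.A k) (G.comul i j)
          (G.comul (i + j) k (G.cast (Nat.add_assoc i j k).symm x))
  left_counit : ∀ j (x : G.A j),
    (TensorProduct.lid F (G.A j))
        (LinearMap.rTensor (G.A j) G.counit
          (G.comul 0 j (G.cast (Nat.zero_add j).symm x))) = x
  frobenius : ∀ i j k (x : G.A i) (y : G.A (j + k)),
    G.comul (i + j) k (G.cast (Nat.add_assoc i j k).symm (G.mul i (j + k) x y))
      = LinearMap.rTensor (G.A k) (G.mulMap i j)
          ((TensorProduct.assoc F (G.A i) (G.A j) (G.A k)).symm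
            (x ⊗ₜ[F] G.comul j k y))
  star_invol : ∀ i (x : G.A i), G.star i (G.star i x) = x
  star_zero : ∀ x : G.A 0, G.star 0 x = x
  star_one : ∀ x : G.A 1, G.star 1 x = x
  star_mul : ∀ i j (x : G.A i) (y : G.A j),
    G.star (i + j) (G.mul i j x y)
      = G.cast (Nat.add_comm j i) (G.mul j i (G.star j y) (G.star i x))
  star_comul : ∀ i j (x : G.A (i + j)),
    G.comul j i (G.cast (Nat.add_comm i j) (G.star (i + j) x))
      = (TensorProduct.comm F (G.A i) (G.A j))
          (TensorProduct.map (G.star i) (G.star j) (G.comul i j x))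

/-! Conjugating by the involution `*` exchanges `δ_{0,j}` and `δ_{j,0}` up to the flip of the
tensor factors, and `τ` is `*`-invariant because `*` is the identity on `A₀`. Hence the left
counit identity for `x*` turns into the right counit identity for `x`. -/

namespace TensorProduct

variable {R M N P : Type*} [CommSemiring R] [AddCommMonoid M] [AddCommMonoid N] [AddCommMonoid P]
  [Module R M] [Module R N] [Module R P]

theorem lid_rTensor_map_of_comp_eq {f : M →ₗ[R] R} {g : M →ₗ[R] M} (hfg : f ∘ₗ g = f)
    (h : N →ₗ[R] P) (t : M ⊗[R] N) :
    TensorProduct.lid R P (f.rTensor P (map g h t))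
      = h (TensorProduct.lid R N (f.rTensor N t)) := by
  induction t using TensorProduct.induction_on with
  | zero => simp
  | tmul m n => simpa using congr($hfg m • h n)
  | add s t hs ht => simp only [map_add, hs, ht]

end TensorProduct

namespace GNFData

variable (G : GNFData F)

theorem cast_cast {a b c : ℕ} (hab : a = b) (hbc : b = c) (x : G.A a) :
    G.cast hbc (G.cast hab x) = G.cast (hab.trans hbc) x := by
  subst hab hbc; rfl

theorem star_cast {a b : ℕ} (h : a = b) (x : G.A a) :
    G.star b (G.cast h x) = G.cast h (G.star a x) := by
  subst h; rfl

end GNFData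

namespace IsGNF

variable {G : GNFData F}

theorem comul_right_zero_star (hG : IsGNF G) (j : ℕ) (x : G.A j) :
    G.comul j 0 (G.star j x) =
      TensorProduct.comm F (G.A 0) (G.A j) (TensorProduct.map (G.star 0) (G.star j)
        (G.comul 0 j (G.cast (Nat.zero_add j).symm x))) := by
  have h := hG.star_comul 0 j (G.cast (Nat.zero_add j).symm x)
  -- the composite cast is along `j = j`, so it is the identity by definitional unfolding
  rwa [G.star_cast, G.cast_cast] at h

theorem counit_comp_star_zero (hG : IsGNF G) : G.counit ∘ₗ G.star 0 = G.counit :=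
  LinearMap.ext fun x => congrArg G.counit (hG.star_zero x)

end IsGNF

/-- In a GNF*-algebra, `τ` is also a partial right counit:
`(Id_{A_j} ⊗ τ) ∘ δ_{j,0} = Id_{A_j}` for every `j`. -/
theorem GNF_right_counit (G : GNFData F) (hG : IsGNF G) :
    ∀ (j : ℕ) (x : G.A j),
      (TensorProduct.rid F (G.A j))
        (LinearMap.lTensor (G.A j) G.counit (G.comul j 0 x)) = x := by
  intro j x
  obtain ⟨z, rfl⟩ : ∃ z, G.star j z = x := ⟨G.star j x, hG.star_invol j x⟩
  rw [hG.comul_right_zero_star, LinearMap.lTensor_comm, TensorProduct.rid_comm,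
    TensorProduct.lid_rTensor_map_of_comp_eq hG.counit_comp_star_zero, hG.left_counit]
end

section
/- Let A be a GNF*-algebra and λ ∈ A₁*. Define α_i : A_i → A_{i−1} by α_i = (Id_{A_{i−1}} ⊗ λ) ∘ δ_{i−1,1}. Then α = ⊕ α_i is a left (A, μ)-module homomorphism: α_{i+j} ∘ μ_{i,j} = μ_{i,j−1} ∘ (Id_{A_i} ⊗ α_j), and a left (A, δ)-comodule homomorphism: δ_{i,j−1} ∘ α_{i+j} = (Id_{A_i} ⊗ α_j) ∘ δ_{i,j}. -/
open scoped TensorProduct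

variable {F : Type} [Field F]

/-- For `λ ∈ A₁*`, the maps `α_i = (Id ⊗ λ) ∘ δ_{i−1,1}` form a left `(A,μ)`-module
homomorphism and a left `(A,δ)`-comodule homomorphism. -/
theorem GNF_alpha_module_comodule_hom (G : GNFData F) (hG : IsGNF G)
    (lam : G.A 1 →ₗ[F] F)
    (alpha : ∀ i, G.A (i + 1) →ₗ[F] G.A i)
    (halpha : ∀ (i : ℕ) (x : G.A (i + 1)),
      alpha i x = (TensorProduct.rid F (G.A i))
        (LinearMap.lTensor (G.A i) lam (G.comul i 1 x))) :
    (∀ (i j : ℕ) (x : G.A i) (y : G.A (j + 1)),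
        alpha (i + j) (G.mul i (j + 1) x y) = G.mul i j x (alpha j y))
    ∧ (∀ (i j : ℕ) (x : G.A (i + j + 1)),
        G.comul i j (alpha (i + j) x)
          = LinearMap.lTensor (G.A i) (alpha j) (G.comul i (j + 1) x)) := by

  constructor
  · intro i j x y
    have hf : G.comul (i + j) 1 (G.mul i (j + 1) x y)
        = LinearMap.rTensor (G.A 1) (G.mulMap i j)
            ((TensorProduct.assoc F (G.A i) (G.A j) (G.A 1)).symm
              (x ⊗ₜ[F] G.comul j 1 y)) := hG.frobenius i j 1 x y
    rw [halpha, halpha, hf]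
    generalize G.comul j 1 y = t
    induction t using TensorProduct.induction_on with
    | zero => simp
    | tmul c d =>
        simp [GNFData.mulMap, TensorProduct.assoc_symm_tmul,
          TensorProduct.rid_tmul, TensorProduct.tmul_smul]
    | add s t hs ht =>
        simp only [TensorProduct.tmul_add, map_add, hs, ht]
  · intro i j x
    have hco : (TensorProduct.assoc F (G.A i) (G.A j) (G.A 1)).symm
          (LinearMap.lTensor (G.A i) (G.comul j 1) (G.comul i (j + 1) x))
        = LinearMap.rTensor (G.A 1) (G.comul i j) (G.comul (i + j) 1 x) :=
      hG.coassoc i j 1 x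
    rw [halpha]
    have key : ∀ s : G.A (i + j) ⊗[F] G.A 1,
        G.comul i j ((TensorProduct.rid F (G.A (i + j)))
            (LinearMap.lTensor (G.A (i + j)) lam s))
          = (TensorProduct.rid F (G.A i ⊗[F] G.A j))
              (LinearMap.lTensor (G.A i ⊗[F] G.A j) lam
                (LinearMap.rTensor (G.A 1) (G.comul i j) s)) := by
      intro s
      induction s using TensorProduct.induction_on with
      | zero => simp
      | tmul a b => simp [TensorProduct.rid_tmul]
      | add s t hs ht => simp only [map_add, hs, ht]
    rw [key, ← hco]
    generalize G.comul i (j + 1) x = t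
    induction t using TensorProduct.induction_on with
    | zero => simp
    | tmul u v =>
        rw [LinearMap.lTensor_tmul, LinearMap.lTensor_tmul, halpha]
        generalize G.comul j 1 v = s
        induction s using TensorProduct.induction_on with
        | zero => simp
        | tmul c d =>
            simp [TensorProduct.assoc_symm_tmul, TensorProduct.rid_tmul,
              TensorProduct.tmul_smul, TensorProduct.smul_tmul']
        | add s t hs ht =>
            simp only [TensorProduct.tmul_add, map_add, hs, ht]
    | add s t hs ht => simp only [map_add, hs, ht]
end

section
/- Let A₀ be a commutative special Frobenius algebra over a field F (special means μ ∘ δ = Id_{A₀}). Define A = A₀ ⊗ F[x] with grading A_i = A₀ ⊗ F⟨x^i⟩, product μ_{i,j}(a x^i, b x^j) = (ab) x^{i+j}, coproduct δ_{i,j}(a x^{i+j}) = a_{(1)} x^i ⊗ a_{(2)} x^j (Sweedler notation for δ of A₀), unit ε, partial counit τ from A₀, involution * = Id, ω(a x^i) = a x^{i+1}, and α(a x^i) = a x^{i−1} (α(a x⁰) = 0). Then (A, μ, δ, ε, τ, *, α, ω) is a split GNF*-algebra. -/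
open scoped TensorProduct

variable {F : Type} [Field F]

structure SplitGNFData (F : Type) [Field F] extends GNFData F where
  omega : ∀ i, A i →ₗ[F] A (i + 1)
  alpha : ∀ i, A (i + 1) →ₗ[F] A i

/-- The axioms of a split GNF*-algebra: a GNF*-algebra together with a modular splitting. -/
structure IsSplitGNF (G : SplitGNFData F) extends IsGNF G.toGNFData : Prop where
  omega_module : ∀ i j (x : G.A i) (y : G.A j),
    G.omega (i + j) (G.mul i j x y) = G.mul i (j + 1) x (G.omega j y)
  alpha_module : ∀ i j (x : G.A i) (y : G.A (j + 1)),
    G.alpha (i + j) (G.mul i (j + 1) x y) = G.mul i j x (G.alpha j y)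
  omega_comodule : ∀ i j (x : G.A (i + j)),
    G.comul i (j + 1) (G.omega (i + j) x)
      = LinearMap.lTensor (G.A i) (G.omega j) (G.comul i j x)
  alpha_comodule : ∀ i j (x : G.A (i + j + 1)),
    G.comul i j (G.alpha (i + j) x)
      = LinearMap.lTensor (G.A i) (G.alpha j) (G.comul i (j + 1) x)
  alpha_omega : ∀ i (x : G.A i), G.alpha i (G.omega i x) = x

/-- Given a commutative special Frobenius algebra `B = A₀` (special: `μ ∘ δ = Id`),
the graded algebra `A = A₀ ⊗ F[x]` with `A_i = A₀·xⁱ`, product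
`μ_{i,j}(a xⁱ, b xʲ) = ab x^{i+j}`, coproduct `δ_{i,j}(a x^{i+j}) = a₍₁₎ xⁱ ⊗ a₍₂₎ xʲ`,
`* = Id`, `ω(a xⁱ) = a x^{i+1}`, `α(a x^{i+1}) = a xⁱ` is a split GNF*-algebra. -/
theorem special_frobenius_gives_split_GNF
    (B : Type) [AddCommGroup B] [Module F B] [FiniteDimensional F B]
    (m : B →ₗ[F] B →ₗ[F] B) (d : B →ₗ[F] B ⊗[F] B)
    (e : F →ₗ[F] B) (t : B →ₗ[F] F)
    (hassoc : ∀ x y z : B, m (m x y) z = m x (m y z))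
    (hcomm : ∀ x y : B, m x y = m y x)
    (hunit : ∀ x : B, m (e 1) x = x)
    (hcoassoc : ∀ x : B,
      (TensorProduct.assoc F B B B) (LinearMap.rTensor B d (d x))
        = LinearMap.lTensor B d (d x))
    (hcocomm : ∀ x : B, (TensorProduct.comm F B B) (d x) = d x)
    (hcounit : ∀ x : B, (TensorProduct.lid F B) (LinearMap.rTensor B t (d x)) = x)
    (hfrob : ∀ x y : B,
      d (m x y) = LinearMap.rTensor B (TensorProduct.lift m)
        ((TensorProduct.assoc F B B B).symm (x ⊗ₜ[F] d y)))
    (hspecial : ∀ x : B, TensorProduct.lift m (d x) = x) :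
    IsSplitGNF (F := F)
      { A := fun _ => B
        mul := fun _ _ => m
        comul := fun _ _ => d
        unit := e
        counit := t
        star := fun _ => LinearMap.id
        omega := fun _ => LinearMap.id
        alpha := fun _ => LinearMap.id } := by
  have hc : ∀ (p q : ℕ) (h : p = q) (x : B),
      (GNFData.cast (G := GNFData.mk (F := F) (fun _ => B) (fun _ _ => m)
        (fun _ _ => d) e t (fun _ => LinearMap.id)) h) x = x := by
    intro p q h x; subst h; rfl
  refine ⟨⟨?_, ?_, ?_, ?_, ?_, ?_, ?_, ?_, ?_, ?_, ?_⟩, ?_, ?_, ?_, ?_, ?_⟩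
  · intro i; infer_instance
  · intro i j k x y z; rw [hc]; exact (hassoc x y z).symm
  · intro j x; rw [hc]; exact hunit x
  · intro i j k x
    rw [hc]
    exact congrArg (TensorProduct.assoc F B B B).symm (hcoassoc x).symm
      |>.trans ((TensorProduct.assoc F B B B).symm_apply_apply _)
  · intro j x; rw [hc]; exact hcounit x
  · intro i j k x y; rw [hc]; exact hfrob x y
  · intro i x; rfl
  · intro x; rfl
  · intro x; rfl
  · intro i j x y; rw [hc]; exact hcomm x y
  · intro i j x
    rw [hc]
    show d x = (TensorProduct.comm F B B) (TensorProduct.map LinearMap.id LinearMap.id (d x))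
    rw [TensorProduct.map_id, LinearMap.id_apply, hcocomm]
  · intro i j x y; rfl
  · intro i j x y; rfl
  · intro i j x
    show d x = LinearMap.lTensor B LinearMap.id (d x)
    rw [LinearMap.lTensor_id, LinearMap.id_apply]
  · intro i j x
    show d x = LinearMap.lTensor B LinearMap.id (d x)
    rw [LinearMap.lTensor_id, LinearMap.id_apply]
  · intro i x; rfl
end

section
/- Let (A, α, ω) be a split GNF*-algebra in which dim A_i = 1 for every i ∈ ℕ, the mapping class group representations are trivial, and μ_{i,n−i} ∘ δ_{i,n−i} = Id_{A_n} for all 0 ≤ i ≤ n. Then A is isomorphic as a split GNF*-algebra to F[x] with A_i = F⟨x^i⟩, μ(x^i ⊗ x^j) = x^{i+j}, δ(x^n) = Σ_{i=0}^n x^i ⊗ x^{n−i}, ω = multiplication by x, α(x^{i+1}) = x^i, α(1) = 0, ε = Id_F, τ = Id_F, and * = Id. -/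
open scoped TensorProduct

variable {F : Type} [Field F]

/-- A split GNF*-algebra with all graded pieces one-dimensional, trivial mapping class
group representations (whose algebraic content is `μ_{i,n−i} ∘ δ_{i,n−i} = Id_{A_n}`),
is isomorphic as a split GNF*-algebra to `F[x]` with `A_i = F⟨xⁱ⟩`,
`μ(xⁱ ⊗ xʲ) = x^{i+j}`, `δ(xⁿ) = Σ xⁱ ⊗ x^{n−i}`, `ω = ·x`, `α(x^{i+1}) = xⁱ`,
`ε = τ = Id_F`, `* = Id`. -/
theorem one_dimensional_split_GNF_is_polynomial
    (G : SplitGNFData F) (hG : IsSplitGNF G)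
    (hdim : ∀ i, Module.finrank F (G.A i) = 1)
    (hspecial : ∀ (n i : ℕ) (h : i ≤ n) (x : G.A n),
      G.toGNFData.cast (Nat.add_sub_cancel' h)
        (G.toGNFData.mulMap i (n - i)
          (G.comul i (n - i) (G.toGNFData.cast (Nat.add_sub_cancel' h).symm x))) = x) :
    ∃ e : ∀ i, G.A i ≃ₗ[F] F,
      (∀ (i j : ℕ) (x : G.A i) (y : G.A j),
          e (i + j) (G.mul i j x y) = e i x * e j y)
      ∧ (∀ (i j : ℕ) (x : G.A (i + j)),
          TensorProduct.map (e i : G.A i →ₗ[F] F) (e j : G.A j →ₗ[F] F) (G.comul i j x)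
            = (e (i + j) x) ⊗ₜ[F] (1 : F))
      ∧ (∀ t : F, e 0 (G.unit t) = t)
      ∧ (∀ x : G.A 0, G.counit x = e 0 x)
      ∧ (∀ (i : ℕ) (x : G.A i), e i (G.star i x) = e i x)
      ∧ (∀ (i : ℕ) (x : G.A i), e (i + 1) (G.omega i x) = e i x)
      ∧ (∀ (i : ℕ) (x : G.A (i + 1)), e i (G.alpha i x) = e (i + 1) x) := by
  
  classical
  -- basic cast lemmas
  have cast_rfl : ∀ {m : ℕ} (h : m = m) (x : G.A m), G.toGNFData.cast h x = x := by
    intro m h x; rfl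
  have cast_cast : ∀ {m n p : ℕ} (h1 : m = n) (h2 : n = p) (x : G.A m),
      G.toGNFData.cast h2 (G.toGNFData.cast h1 x) = G.toGNFData.cast (h1.trans h2) x := by
    intro m n p h1 h2 x; subst h1; subst h2; rfl
  -- the distinguished basis vectors
  obtain ⟨u, hu_def⟩ : ∃ u : G.A 0, u = G.unit 1 := ⟨_, rfl⟩
  obtain ⟨b, hb0, hbs⟩ : ∃ b : ∀ i, G.A i, b 0 = u ∧ ∀ i, b (i + 1) = G.omega i (b i) :=
    ⟨fun i => Nat.rec u (fun i bi => G.omega i bi) i, rfl, fun i => rfl⟩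
  have cast_b : ∀ {m n : ℕ} (h : m = n), G.toGNFData.cast h (b m) = b n := by
    intro m n h; subst h; exact cast_rfl _ _
  -- u ≠ 0
  have hu : u ≠ 0 := by
    intro h
    haveI : Nontrivial (G.A 0) :=
      Module.nontrivial_of_finrank_pos (R := F) (by rw [hdim 0]; norm_num)
    obtain ⟨x, hx⟩ := exists_ne (0 : G.A 0)
    have h1 : G.mul 0 0 u x = x := by rw [hu_def]; exact hG.left_unit 0 x
    rw [h] at h1
    simp only [map_zero, LinearMap.zero_apply] at h1
    exact hx h1.symm
  have hb : ∀ i, b i ≠ 0 := by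
    intro i
    induction i with
    | zero => rw [hb0]; exact hu
    | succ i ih =>
      rw [hbs]
      intro h
      apply ih
      have h2 := hG.alpha_omega i (b i)
      rw [h, map_zero] at h2
      exact h2.symm
  -- scalar representation
  have hspan : ∀ i (w : G.A i), ∃ c : F, c • b i = w := fun i w =>
    ((finrank_eq_one_iff_of_nonzero' (b i) (hb i)).mp (hdim i)) w
  have smul_cancel : ∀ {i : ℕ} {c : F} {x : G.A i}, x ≠ 0 → c • x = x → c = 1 := by
    intro i c x hx h
    have h2 : (c - 1) • x = 0 := by rw [sub_smul, one_smul, h, sub_self]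
    rcases smul_eq_zero.mp h2 with h1 | h1
    · exact sub_eq_zero.mp h1
    · exact absurd h1 hx
  -- the coordinate isomorphisms
  have hbij : ∀ i, Function.Bijective (LinearMap.toSpanSingleton F (G.A i) (b i)) := by
    intro i
    constructor
    · intro s t hst
      simp only [LinearMap.toSpanSingleton_apply] at hst
      have h2 : (s - t) • b i = 0 := by rw [sub_smul, hst, sub_self]
      rcases smul_eq_zero.mp h2 with h1 | h1
      · exact sub_eq_zero.mp h1
      · exact absurd h1 (hb i)
    · exact fun w => hspan i w
  refine ⟨fun i => (LinearEquiv.ofBijective _ (hbij i)).symm, ?_⟩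
  set e : ∀ i, G.A i ≃ₗ[F] F :=
    fun i => (LinearEquiv.ofBijective _ (hbij i)).symm with he_def
  have he : ∀ i (x : G.A i), (e i x) • b i = x := by
    intro i x
    have h1 := (LinearEquiv.ofBijective _ (hbij i)).apply_symm_apply x
    simpa only [LinearEquiv.ofBijective_apply, LinearMap.toSpanSingleton_apply] using h1
  have heb : ∀ i, e i (b i) = 1 := fun i => smul_cancel (hb i) (he i (b i))
  -- right unit
  have runit : ∀ i (x : G.A i), G.mul i 0 x u = x := by
    intro i x
    have h1 := hG.star_mul i 0 x u
    rw [hG.star_zero u, hu_def, hG.left_unit i (G.toGNFData.star i x)] at h1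
    have h2 : G.toGNFData.star i (G.mul i 0 x u) = G.toGNFData.star i x := by
      rw [hu_def]
      exact h1.trans ((cast_cast _ _ _).trans (cast_rfl _ _))
    have h3 := congrArg (G.toGNFData.star i) h2
    rwa [hG.star_invol, hG.star_invol] at h3
  -- products of basis vectors
  have mul_b : ∀ i j, G.mul i j (b i) (b j) = b (i + j) := by
    intro i j
    induction j with
    | zero => rw [hb0]; exact runit i (b i)
    | succ j ih =>
      have h1 := hG.omega_module i j (b i) (b j)
      rw [ih] at h1
      rw [hbs j, ← h1, ← hbs (i + j)]
      exact rfl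
  -- star fixes basis vectors
  have star_b : ∀ i, G.toGNFData.star i (b i) = b i := by
    intro i
    induction i with
    | zero => rw [hb0]; exact hG.star_zero u
    | succ i ih =>
      have h2 := hG.star_mul i 1 (b i) (b 1)
      rw [mul_b i 1, hG.star_one (b 1), ih, mul_b 1 i, cast_b] at h2
      exact h2
  -- tensor representation
  have trep : ∀ i j (t : G.A i ⊗[F] G.A j), ∃ c : F, t = c • (b i ⊗ₜ[F] b j) := by
    intro i j t
    set E := (TensorProduct.congr (e i) (e j)).trans (TensorProduct.lid F F) with hE
    refine ⟨E t, ?_⟩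
    apply E.injective
    rw [map_smul]
    have hEb : E (b i ⊗ₜ[F] b j) = 1 := by
      simp [hE, TensorProduct.congr_tmul, heb]
    rw [hEb, smul_eq_mul, mul_one]
  have mulMap_tmul : ∀ i j (x : G.A i) (y : G.A j),
      G.toGNFData.mulMap i j (x ⊗ₜ[F] y) = G.mul i j x y := by
    intro i j x y; exact TensorProduct.lift.tmul x y
  -- comultiplication of u
  have hmu : G.mul 0 0 u u = u := by
    rw [hu_def]; exact hG.left_unit 0 (G.unit 1)
  have hs0 : G.toGNFData.mulMap 0 0 (G.comul 0 0 u) = u := by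
    rw [hu_def]; exact hspecial 0 0 (le_refl 0) (G.unit 1)
  have comul00 : G.comul 0 0 u = u ⊗ₜ[F] u := by
    obtain ⟨c, hc⟩ := trep 0 0 (G.comul 0 0 u)
    rw [hc, map_smul, mulMap_tmul, hb0, hmu] at hs0
    rw [hc, smul_cancel hu hs0, one_smul, hb0]
  have counit_u : G.counit u = 1 := by
    have h : TensorProduct.lid F (G.A 0)
        (LinearMap.rTensor (G.A 0) G.counit (G.comul 0 0 u)) = u := by
      rw [hu_def]; exact hG.left_counit 0 (G.unit 1)
    rw [comul00] at h
    simp only [LinearMap.rTensor_tmul, TensorProduct.lid_tmul] at h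
    exact smul_cancel hu h
  have counit_b0 : G.counit (b 0) = 1 := by rw [hb0]; exact counit_u
  -- comultiplication of basis vectors, left form
  have comul0 : ∀ i, G.comul 0 i (b (0 + i)) = u ⊗ₜ[F] b i := by
    intro i
    obtain ⟨c, hc⟩ := trep 0 i (G.comul 0 i (b (0 + i)))
    have h := hG.left_counit i (b i)
    rw [cast_b, hc] at h
    simp only [map_smul, LinearMap.rTensor_tmul, counit_b0, TensorProduct.lid_tmul,
      one_smul] at h
    rw [hc, smul_cancel (hb i) h, one_smul, hb0]
  -- comultiplication of basis vectors
  have comul_b : ∀ i j, G.comul i j (b (i + j)) = b i ⊗ₜ[F] b j := by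
    intro i j
    induction j with
    | zero =>
      have h := hG.star_comul 0 i (b (0 + i))
      rw [star_b (0 + i), cast_b, comul0 i] at h
      simp only [TensorProduct.map_tmul, hG.star_zero u, star_b i,
        TensorProduct.comm_tmul] at h
      rw [hb0]
      exact h
    | succ j ih =>
      have h := hG.omega_comodule i j (b (i + j))
      rw [ih, ← hbs (i + j)] at h
      simp only [LinearMap.lTensor_tmul] at h
      rw [hbs j]
      exact h
  -- assemble
  refine ⟨?_, ?_, ?_, ?_, ?_, ?_, ?_⟩
  · intro i j x y
    obtain ⟨s, hs⟩ := hspan i x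
    obtain ⟨t, ht⟩ := hspan j y
    subst hs; subst ht
    simp only [map_smul, LinearMap.smul_apply]
    rw [mul_b i j, heb, heb, heb]
    simp only [smul_eq_mul, mul_one]
    ring
  · intro i j x
    obtain ⟨s, hs⟩ := hspan (i + j) x
    subst hs
    simp only [map_smul, comul_b, TensorProduct.map_tmul, LinearEquiv.coe_coe, heb,
      TensorProduct.smul_tmul', smul_eq_mul, mul_one]
  · intro t
    have h1 : G.unit t = t • b 0 := by
      rw [hb0, hu_def, ← map_smul, smul_eq_mul, mul_one]
    rw [h1, map_smul, heb, smul_eq_mul, mul_one]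
  · intro x
    obtain ⟨s, hs⟩ := hspan 0 x
    subst hs
    simp only [map_smul, heb, counit_b0, smul_eq_mul, mul_one]
  · intro i x
    obtain ⟨s, hs⟩ := hspan i x
    subst hs
    simp only [map_smul]
    rw [star_b i]
  · intro i x
    obtain ⟨s, hs⟩ := hspan i x
    subst hs
    simp only [map_smul]
    rw [← hbs i, heb, heb]
  · intro i x
    obtain ⟨s, hs⟩ := hspan (i + 1) x
    subst hs
    simp only [map_smul]
    rw [hbs i, hG.alpha_omega i (b i), ← hbs i, heb, heb]
end

section
/- Let (A, α, ω) be a split GNF*-algebra with splitting data (w, λ) where w = ω₀(1) ∈ A₁ and λ = τ ∘ α₁ ∈ A₁*. Then the identity α_{i+1} ∘ ω_i = Id_{A_i} (for all i) is equivalent to the single condition α₁(w) = 1 in A₀, i.e., (Id_{A₀} ⊗ λ) ∘ δ_{0,1}(w) = 1. -/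
open scoped TensorProduct

variable {F : Type} [Field F]

lemma GNFData.cast_self (G : GNFData F) {m : ℕ} (h : m = m) (x : G.A m) :
    G.cast h x = x := rfl

lemma GNFData.cast_cast_s18 (G : GNFData F) {m n p : ℕ} (h1 : m = n) (h2 : n = p)
    (x : G.A m) : G.cast h2 (G.cast h1 x) = G.cast (h1.trans h2) x := by
  subst h1; subst h2; rfl

lemma right_unit_of (G : GNFData F) (hG : IsGNF G) (i : ℕ) (x : G.A i) :
    G.mul i 0 x (G.unit 1) = x := by
  have h1 := hG.star_mul i 0 x (G.unit 1)
  rw [hG.star_zero, hG.left_unit i (G.star i x), G.cast_cast_s18] at h1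
  have h1' : G.star i (G.mul i 0 x (G.unit 1)) = G.star i x := h1
  have := congrArg (G.star i) h1'
  rwa [hG.star_invol, hG.star_invol] at this

lemma aux_tensor (G : GNFData F) (i : ℕ) (lam : G.A 1 →ₗ[F] F) (x : G.A i)
    (c : G.A 0 ⊗[F] G.A 1) :
    (TensorProduct.rid F (G.A (i + 0)))
      (LinearMap.lTensor (G.A (i + 0)) lam
        (LinearMap.rTensor (G.A 1) (G.mulMap i 0)
          ((TensorProduct.assoc F (G.A i) (G.A 0) (G.A 1)).symm (x ⊗ₜ[F] c))))
    = G.mul i 0 x ((TensorProduct.rid F (G.A 0)) (LinearMap.lTensor (G.A 0) lam c)) := by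
  induction c using TensorProduct.induction_on with
  | zero => simp
  | tmul u v =>
      simp [GNFData.mulMap, TensorProduct.assoc_symm_tmul, TensorProduct.smul_tmul']
  | add a b ha hb => simp only [TensorProduct.tmul_add, map_add, ha, hb]

/-- Given splitting data `(w, λ) ∈ A₁ × A₁*`, with `ω_i(x) = μ_{i,1}(x ⊗ w)` and
`α_i = (Id ⊗ λ) ∘ δ_{i−1,1}`, the identity `α_{i+1} ∘ ω_i = Id_{A_i}` for all `i`
is equivalent to the single condition `α₁(w) = 1`, i.e.
`(Id_{A₀} ⊗ λ)(δ_{0,1}(w)) = ε(1)`. -/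
theorem splitting_condition_iff (G : GNFData F) (hG : IsGNF G)
    (w : G.A 1) (lam : G.A 1 →ₗ[F] F) :
    (∀ (i : ℕ) (x : G.A i),
        (TensorProduct.rid F (G.A i))
          (LinearMap.lTensor (G.A i) lam (G.comul i 1 (G.mul i 1 x w))) = x)
    ↔ (TensorProduct.rid F (G.A 0))
        (LinearMap.lTensor (G.A 0) lam (G.comul 0 1 w)) = G.unit 1 := by
  constructor
  · intro H
    have h0 := H 0 (G.unit 1)
    rw [hG.left_unit 1 w, G.cast_self] at h0
    exact h0
  · intro H i x
    have hf : G.comul i 1 (G.mul i 1 x w)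
        = LinearMap.rTensor (G.A 1) (G.mulMap i 0)
            ((TensorProduct.assoc F (G.A i) (G.A 0) (G.A 1)).symm
              (x ⊗ₜ[F] G.comul 0 1 w)) := hG.frobenius i 0 1 x w
    have key : (TensorProduct.rid F (G.A i))
        (LinearMap.lTensor (G.A i) lam (G.comul i 1 (G.mul i 1 x w)))
        = G.mul i 0 x ((TensorProduct.rid F (G.A 0))
            (LinearMap.lTensor (G.A 0) lam (G.comul 0 1 w))) := by
      rw [hf]; exact aux_tensor G i lam x (G.comul 0 1 w)
    rw [key, H]
    exact right_unit_of G hG i x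
end
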